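/- Let (y, p) : ℝ → ℝ × ℝ be the differentiable solution on all of ℝ of the system y'(t) = -p(t)·y(t), p'(t) = y(t)² - y(t) with y(0) = 1 and p(0) = √(1 - 0.02). Then the solution is periodic, and its least positive period equals T = 10·√2·π (numerically T = 44.42882938158366247015880990060693698614…). -/

import Mathlib

/-!
The energy `H` is conserved, and `H < 0` keeps `y` positive. With `ω = √(-2H)`, the substitution
`x = 1/y - 1/ω²`, `v = p/y` turns the system into the harmonic oscillator `x' = v`, `v' = -ω² x`,
and every orbit of the oscillator other than its rest point has least period `2π/ω`.
For `H = -0.01` this is `2π/√0.02 = 10·√2·π`.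
-/

open Real Function

section HarmonicOscillator

variable {ω : ℝ} {x v : ℝ → ℝ}

theorem harmonic_eq_zero_of_eq_zero (hω : ω ≠ 0) (hx : ∀ t, HasDerivAt x (v t) t)
    (hv : ∀ t, HasDerivAt v (-(ω ^ 2 * x t)) t) (hx0 : x 0 = 0) (hv0 : v 0 = 0) (t : ℝ) :
    x t = 0 ∧ v t = 0 := by
  have hE (s : ℝ) : HasDerivAt (fun s => v s ^ 2 + ω ^ 2 * x s ^ 2) 0 s :=
    (((hv s).pow 2).add (((hx s).pow 2).const_mul (ω ^ 2))).congr_deriv (by ring)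
  have hconst : v t ^ 2 + ω ^ 2 * x t ^ 2 = 0 := by
    simpa [hx0, hv0] using
      is_const_of_deriv_eq_zero (fun s => (hE s).differentiableAt) (fun s => (hE s).deriv) t 0
  have hωx : (ω * x t) ^ 2 = 0 := by nlinarith [sq_nonneg (v t), sq_nonneg (ω * x t)]
  have hvt : v t ^ 2 = 0 := by nlinarith [sq_nonneg (v t), sq_nonneg (ω * x t)]
  exact ⟨by simpa [hω] using hωx, pow_eq_zero_iff two_ne_zero |>.mp hvt⟩

theorem harmonic_eq_cos_add_sin (hω : ω ≠ 0) (hx : ∀ t, HasDerivAt x (v t) t)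
    (hv : ∀ t, HasDerivAt v (-(ω ^ 2 * x t)) t) (t : ℝ) :
    x t = x 0 * cos (ω * t) + v 0 / ω * sin (ω * t) ∧
      v t = v 0 * cos (ω * t) - ω * x 0 * sin (ω * t) := by
  have hθ (s : ℝ) : HasDerivAt (fun s => ω * s) ω s := by
    simpa using (hasDerivAt_id s).const_mul ω
  have hX (s : ℝ) : HasDerivAt (fun s => x s - (x 0 * cos (ω * s) + v 0 / ω * sin (ω * s)))
      (v s - (v 0 * cos (ω * s) - ω * x 0 * sin (ω * s))) s :=
    ((hx s).sub ((((hθ s).cos).const_mul (x 0)).add (((hθ s).sin).const_mul (v 0 / ω))))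
      |>.congr_deriv (by field_simp; ring)
  have hV (s : ℝ) : HasDerivAt (fun s => v s - (v 0 * cos (ω * s) - ω * x 0 * sin (ω * s)))
      (-(ω ^ 2 * (x s - (x 0 * cos (ω * s) + v 0 / ω * sin (ω * s))))) s :=
    ((hv s).sub ((((hθ s).cos).const_mul (v 0)).sub (((hθ s).sin).const_mul (ω * x 0))))
      |>.congr_deriv (by field_simp; ring)
  have h := harmonic_eq_zero_of_eq_zero hω hX hV (by simp) (by simp) t
  exact ⟨sub_eq_zero.mp h.1, sub_eq_zero.mp h.2⟩

theorem two_pi_le_of_cos_eq_one {θ : ℝ} (hθ : 0 < θ) (h : cos θ = 1) : 2 * π ≤ θ := by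
  obtain ⟨n, rfl⟩ := (cos_eq_one_iff θ).mp h
  have hn : (0 : ℝ) < n := pos_of_mul_pos_left hθ (by positivity)
  have hn' : (1 : ℝ) ≤ n := by exact_mod_cast (Int.cast_pos.mp hn : 0 < n)
  nlinarith [pi_pos]

theorem isLeast_period_harmonic (hω : 0 < ω) (hx : ∀ t, HasDerivAt x (v t) t)
    (hv : ∀ t, HasDerivAt v (-(ω ^ 2 * x t)) t) (h0 : x 0 ≠ 0 ∨ v 0 ≠ 0) :
    IsLeast {T : ℝ | 0 < T ∧ Periodic (fun t => (x t, v t)) T} (2 * π / ω) := by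
  have hsol := harmonic_eq_cos_add_sin hω.ne' hx hv
  refine ⟨⟨by positivity, fun t => ?_⟩, fun T ⟨hT, hper⟩ => ?_⟩
  · have hshift : ω * (t + 2 * π / ω) = ω * t + 2 * π := by field_simp
    simp only [hsol (t + 2 * π / ω), hsol t, hshift, cos_add_two_pi, sin_add_two_pi]
  · obtain ⟨hxT, hvT⟩ : x T = x 0 ∧ v T = v 0 := by simpa using hper 0
    obtain ⟨hxT', hvT'⟩ := hsol T
    set c := cos (ω * T)
    set s := sin (ω * T)
    have hrot₁ : x 0 * (c - 1) + v 0 / ω * s = 0 := by linarith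
    have hrot₂ : v 0 / ω * (c - 1) - x 0 * s = 0 := by
      field_simp
      linarith
    have hnorm : 0 < x 0 ^ 2 + (v 0 / ω) ^ 2 := by
      rcases h0 with h | h
      · positivity
      · have : v 0 / ω ≠ 0 := div_ne_zero h hω.ne'
        positivity
    have hc : c = 1 := by
      have : (x 0 ^ 2 + (v 0 / ω) ^ 2) * (c - 1) = 0 := by
        linear_combination x 0 * hrot₁ + v 0 / ω * hrot₂
      linarith [(mul_eq_zero.mp this).resolve_left hnorm.ne']
    rw [div_le_iff₀ hω, mul_comm T]
    exact two_pi_le_of_cos_eq_one (by positivity) hc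

end HarmonicOscillator

noncomputable def morseEnergy (y p : ℝ) : ℝ := p ^ 2 / 2 + (y ^ 2 - 2 * y) / 2

section MorseSystem

variable {y p : ℝ → ℝ}

theorem morseEnergy_eq_initial (hy : ∀ t, HasDerivAt y (-p t * y t) t)
    (hp : ∀ t, HasDerivAt p (y t ^ 2 - y t) t) (t : ℝ) :
    morseEnergy (y t) (p t) = morseEnergy (y 0) (p 0) := by
  have hH (s : ℝ) : HasDerivAt (fun s => morseEnergy (y s) (p s)) 0 s :=
    (((hp s).pow 2).div_const 2).add ((((hy s).pow 2).sub ((hy s).const_mul 2)).div_const 2)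
      |>.congr_deriv (by ring)
  exact is_const_of_deriv_eq_zero (fun s => (hH s).differentiableAt) (fun s => (hH s).deriv) t 0

theorem morse_pos_of_energy_neg (hy : ∀ t, HasDerivAt y (-p t * y t) t)
    (hp : ∀ t, HasDerivAt p (y t ^ 2 - y t) t) (hH : morseEnergy (y 0) (p 0) < 0) (t : ℝ) :
    0 < y t := by
  have hHt := morseEnergy_eq_initial hy hp t
  unfold morseEnergy at hHt hH
  nlinarith [sq_nonneg (p t)]

theorem harmonic_of_morse (hy : ∀ t, HasDerivAt y (-p t * y t) t)
    (hp : ∀ t, HasDerivAt p (y t ^ 2 - y t) t) (hH : morseEnergy (y 0) (p 0) < 0) {ω : ℝ}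
    (hω : ω ^ 2 = -2 * morseEnergy (y 0) (p 0)) (t : ℝ) :
    HasDerivAt (fun t => (y t)⁻¹ - (ω ^ 2)⁻¹) (p t / y t) t ∧
      HasDerivAt (fun t => p t / y t) (-(ω ^ 2 * ((y t)⁻¹ - (ω ^ 2)⁻¹))) t := by
  have hyt := (morse_pos_of_energy_neg hy hp hH t).ne'
  have hω0 : ω ≠ 0 := by
    rintro rfl
    linarith
  have hHt := morseEnergy_eq_initial hy hp t
  unfold morseEnergy at hHt hω
  constructor
  · exact (((hy t).inv hyt).sub_const _).congr_deriv (by field_simp)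
  · refine ((hp t).div (hy t) hyt).congr_deriv ?_
    field_simp
    linear_combination hω + 2 * hHt

theorem isLeast_period_morse (hy : ∀ t, HasDerivAt y (-p t * y t) t)
    (hp : ∀ t, HasDerivAt p (y t ^ 2 - y t) t) (hH₀ : -1 / 2 < morseEnergy (y 0) (p 0))
    (hH : morseEnergy (y 0) (p 0) < 0) :
    IsLeast {T : ℝ | 0 < T ∧ Periodic (fun t => (y t, p t)) T}
      (2 * π / √(-2 * morseEnergy (y 0) (p 0))) := by
  set ω := √(-2 * morseEnergy (y 0) (p 0))
  have hω : 0 < ω := sqrt_pos.mpr (by linarith)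
  have hω2 : ω ^ 2 = -2 * morseEnergy (y 0) (p 0) := sq_sqrt (by linarith)
  have hpos := morse_pos_of_energy_neg hy hp hH
  have hsol := harmonic_of_morse hy hp hH hω2
  have hback : (fun t => (y t, p t)) =
      (fun z : ℝ × ℝ => ((z.1 + (ω ^ 2)⁻¹)⁻¹, z.2 * (z.1 + (ω ^ 2)⁻¹)⁻¹)) ∘
        fun t => ((y t)⁻¹ - (ω ^ 2)⁻¹, p t / y t) := by
    funext t
    simp [(hpos t).ne']
  have hiff (T : ℝ) : Periodic (fun t => (y t, p t)) T ↔
      Periodic (fun t => ((y t)⁻¹ - (ω ^ 2)⁻¹, p t / y t)) T :=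
    ⟨fun h => h.comp fun z => (z.1⁻¹ - (ω ^ 2)⁻¹, z.2 / z.1),
      fun h => hback ▸ h.comp _⟩
  -- `(x, v) = 0` only at the rest point `(y, p) = (1, 0)`, where `H = -1/2`.
  have h0 : (y 0)⁻¹ - (ω ^ 2)⁻¹ ≠ 0 ∨ p 0 / y 0 ≠ 0 := by
    by_contra! h
    have hp0 : p 0 = 0 := by simpa [(hpos 0).ne'] using h.2
    have hy0 : y 0 = ω ^ 2 := inv_injective (sub_eq_zero.mp h.1)
    rw [hω2] at hy0
    unfold morseEnergy at hy0 hH₀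
    nlinarith [hpos 0]
  simp_rw [hiff]
  exact isLeast_period_harmonic hω (fun t => (hsol t).1) (fun t => (hsol t).2) h0

end MorseSystem

/-- The solution of the transformed Morse system `y' = -p y`, `p' = y² - y` with
`y(0) = 1`, `p(0) = √(1 - 0.02)` is periodic, with least positive period
`T = 10·√2·π = 44.42882938158366247015880990060693698614…`. -/
theorem transformed_morse_least_period
    (y p : ℝ → ℝ) (hy : Differentiable ℝ y) (hp : Differentiable ℝ p)
    (hode : ∀ t : ℝ, deriv y t = -p t * y t ∧ deriv p t = y t ^ 2 - y t)
    (hy0 : y 0 = 1) (hp0 : p 0 = Real.sqrt (1 - 0.02)) :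
    IsLeast {T : ℝ | 0 < T ∧ Function.Periodic (fun t => (y t, p t)) T}
      (10 * Real.sqrt 2 * Real.pi) := by
  have hH : morseEnergy (y 0) (p 0) = -0.01 := by
    rw [morseEnergy, hy0, hp0, sq_sqrt (by norm_num)]
    norm_num
  have hT : 2 * π / √(-2 * morseEnergy (y 0) (p 0)) = 10 * √2 * π := by
    have hω : -2 * morseEnergy (y 0) (p 0) = (√2 / 10) ^ 2 := by
      rw [hH, div_pow, sq_sqrt zero_le_two]
      norm_num
    rw [hω, sqrt_sq (by positivity)]
    field_simp
    rw [sq_sqrt zero_le_two]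
  rw [← hT]
  exact isLeast_period_morse (fun t => (hode t).1 ▸ (hy t).hasDerivAt)
    (fun t => (hode t).2 ▸ (hp t).hasDerivAt) (by rw [hH]; norm_num) (by rw [hH]; norm_num)
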